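/- In the two-batch (forward-forward) setting, with weight update ΔW = −2η ∑_{k=1}^N (h_{-k} x_{-k}ᵀ − h_{+k} x_{+k}ᵀ) and unit-norm inputs, if the activation pattern of x_i is preserved then h_i' − h_i = −2η ∑_{k=1}^N (cos(x_{-k}, x_i) h_{-k} − cos(x_{+k}, x_i) h_{+k}) ⊙ m_i, and hence Δ_{l1} = ‖h_i'‖₁ − ‖h_i‖₁ = 2η(A_+ − A_−) where A_± = ∑_k ‖h_{±k} ⊙ m_i‖₁ cos(x_{±k}, x_i). -/
import Mathlib


noncomputable section

def relu (v : ℝ) : ℝ := max v 0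

def matVec {n m : ℕ} (W : Fin n → Fin m → ℝ) (x : Fin m → ℝ) : Fin n → ℝ :=
  fun p => ∑ q, W p q * x q

def mask {n : ℕ} (v : Fin n → ℝ) : Fin n → ℝ := fun p => if 0 < v p then 1 else 0

def l1 {n : ℕ} (v : Fin n → ℝ) : ℝ := ∑ p, |v p|

def l2 {n : ℕ} (v : Fin n → ℝ) : ℝ := Real.sqrt (∑ p, (v p) ^ 2)

def cosv {n : ℕ} (u v : Fin n → ℝ) : ℝ := (∑ p, u p * v p) / (l2 u * l2 v)

lemma relu_nonneg (v : ℝ) : 0 ≤ relu v := le_max_right _ _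

lemma relu_key (a d : ℝ) (ha : a ≠ 0) (hd : |d| < |a|) :
    relu (a + d) - relu a = d * (if 0 < a then 1 else 0) := by
  rcases lt_or_gt_of_ne ha with h | h
  · rw [if_neg (not_lt.2 h.le)]
    have h2 : a + d < 0 := by
      have := abs_lt.1 hd
      rw [abs_of_neg h] at this; linarith [this.2]
    simp [relu, max_eq_right h.le, max_eq_right h2.le]
  · rw [if_pos h]
    have h2 : 0 < a + d := by
      have := abs_lt.1 hd; rw [abs_of_pos h] at this; linarith [this.1]
    simp [relu, max_eq_left h.le, max_eq_left h2.le]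

theorem forward_forward_l1_change {n m N : ℕ} (η : ℝ) (hη : 0 < η)
    (W : Fin n → Fin m → ℝ)
    (xpos xneg : Fin N → Fin m → ℝ) (xi : Fin m → ℝ)
    (hxpos : ∀ k, l2 (xpos k) = 1) (hxneg : ∀ k, l2 (xneg k) = 1) (hxi : l2 xi = 1)
    (hpos hneg : Fin N → Fin n → ℝ)
    (hposdef : ∀ k, hpos k = fun p => relu (matVec W (xpos k) p))
    (hnegdef : ∀ k, hneg k = fun p => relu (matVec W (xneg k) p))
    (δ : Fin n → ℝ)
    (hδ : δ = fun p => -2 * η * ∑ k,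
      (cosv (xneg k) xi * hneg k p - cosv (xpos k) xi * hpos k p))
    (hnz : ∀ p, matVec W xi p ≠ 0)
    (hsmall : ∀ p, |δ p| < |matVec W xi p|) :
    (∀ p, relu (matVec W xi p + δ p) - relu (matVec W xi p) =
      (-2 * η * ∑ k, (cosv (xneg k) xi * hneg k p - cosv (xpos k) xi * hpos k p)) *
        mask (matVec W xi) p) ∧
    l1 (fun p => relu (matVec W xi p + δ p)) - l1 (fun p => relu (matVec W xi p)) =
      2 * η *
        ((∑ k, l1 (fun p => hpos k p * mask (matVec W xi) p) * cosv (xpos k) xi) -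
         (∑ k, l1 (fun p => hneg k p * mask (matVec W xi) p) * cosv (xneg k) xi)) := by
  have hposnn : ∀ k p, 0 ≤ hpos k p := fun k p => by rw [hposdef k]; exact relu_nonneg _
  have hnegnn : ∀ k p, 0 ≤ hneg k p := fun k p => by rw [hnegdef k]; exact relu_nonneg _
  have masknn : ∀ p, 0 ≤ mask (matVec W xi) p := fun p => by
    unfold mask; split <;> norm_num
  have key : ∀ p, relu (matVec W xi p + δ p) - relu (matVec W xi p) =
      δ p * mask (matVec W xi) p := fun p =>
    relu_key _ _ (hnz p) (hsmall p)
  constructor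
  · intro p
    rw [key p, hδ]
  · have hl1 : ∀ (v : Fin n → ℝ), l1 (fun p => relu (v p)) = ∑ p, relu (v p) := by
      intro v; unfold l1; exact Finset.sum_congr rfl fun p _ => abs_of_nonneg (relu_nonneg _)
    rw [hl1 (fun p => matVec W xi p + δ p), hl1 (matVec W xi), ← Finset.sum_sub_distrib]
    have : ∑ p, (relu (matVec W xi p + δ p) - relu (matVec W xi p)) =
        ∑ p, δ p * mask (matVec W xi) p := Finset.sum_congr rfl fun p _ => key p
    rw [this]
    have hl1' : ∀ (h : Fin n → ℝ) (_ : ∀ p, 0 ≤ h p),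
        l1 (fun p => h p * mask (matVec W xi) p) = ∑ p, h p * mask (matVec W xi) p := by
      intro h hh; unfold l1
      exact Finset.sum_congr rfl fun p _ =>
        abs_of_nonneg (mul_nonneg (hh p) (masknn p))
    simp only [hδ, hl1' (hpos _) (hposnn _), hl1' (hneg _) (hnegnn _)]
    have expand : ∀ x, (-2*η * ∑ k, (cosv (xneg k) xi * hneg k x - cosv (xpos k) xi * hpos k x)) * mask (matVec W xi) x
        = ∑ k, (-2*η) * ((cosv (xneg k) xi * hneg k x - cosv (xpos k) xi * hpos k x) * mask (matVec W xi) x) := by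
      intro x; rw [Finset.mul_sum, Finset.sum_mul]
      exact Finset.sum_congr rfl fun k _ => by ring
    simp only [expand]
    rw [Finset.sum_comm, mul_sub, Finset.mul_sum, Finset.mul_sum, ← Finset.sum_sub_distrib]
    refine Finset.sum_congr rfl fun k _ => ?_
    rw [Finset.sum_mul, Finset.sum_mul, Finset.mul_sum, Finset.mul_sum, ← Finset.sum_sub_distrib]
    refine Finset.sum_congr rfl fun x _ => ?_
    ring
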